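/- Let d ≥ 1, s ≥ 0, and let 0 ≤ e_1 ≤ ⋯ ≤ e_s < d be integers. Define (f_{−1}, f_0, …, f_{d−1}) by ∑_{i=0}^{d} f_{i−1} x^i = (1+x)^d + ∑_{j=1}^{s} ((1+x)^d − (1+x)^{e_j}). Then f_{−1} ≤ f_0 ≤ ⋯ ≤ f_{⌊(d+1)/2⌋−1} and f_{⌊(d+1)/2⌋−1} ≥ f_{⌊(d+1)/2⌋} ≥ ⋯ ≥ f_{d−1}; in particular (f_0, …, f_{d−1}) is unimodal. -/
import Mathlib

open Polynomial Finset

lemma incr_choose (n k : ℕ) (h : 2*k+1 ≤ n) : n.choose k ≤ n.choose (k+1) := by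
  rcases eq_or_lt_of_le h with heq | hlt
  · have h1 : k + 1 ≤ n := by omega
    have h2 := Nat.choose_symm h1
    have h3 : n - (k+1) = k := by omega
    rw [h3] at h2
    exact h2.le
  · exact Nat.choose_le_succ_of_lt_half_left (by omega)

lemma decr_choose (n k : ℕ) (h : n ≤ 2*k+1) : n.choose (k+1) ≤ n.choose k := by
  by_cases hn : n ≤ k
  · simp [Nat.choose_eq_zero_of_lt (show n < k+1 by omega)]
  · have hk1 : k+1 ≤ n := by omega
    have e1 : n.choose (n-(k+1)) = n.choose (k+1) := Nat.choose_symm hk1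
    have e2 : n.choose (n-k) = n.choose k := Nat.choose_symm (by omega)
    have h3 : n - k = (n - (k+1)) + 1 := by omega
    have := incr_choose n (n-(k+1)) (by omega)
    rw [← h3] at this
    omega

lemma g_step (n m : ℕ) :
    ((n+1).choose (m+2) : ℤ) - (n+1).choose (m+1)
      = (n.choose (m+2) - n.choose m) := by
  have h1 := Nat.choose_succ_succ n (m+1)
  have h2 := Nat.choose_succ_succ n m
  push_cast [h1, h2]; ring

lemma g_mono_up (k e : ℕ) : ∀ d, e ≤ d → 2*k+1 ≤ e →
    ((e.choose (k+1):ℤ) - e.choose k) ≤ d.choose (k+1) - d.choose k := by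
  intro d hd
  induction d, hd using Nat.le_induction with
  | base => intro _; exact le_refl _
  | succ n hn ih =>
    intro he
    rcases Nat.eq_zero_or_pos k with rfl | hk
    · simp [Nat.choose_one_right]; push_cast; omega
    · obtain ⟨m, rfl⟩ : ∃ m, k = m + 1 := ⟨k-1, by omega⟩
      have hstep := g_step n m
      have hincr : (n.choose m : ℤ) ≤ n.choose (m+1) := by
        exact_mod_cast incr_choose n m (by omega)
      have := ih he
      push_cast at *
      linarith

lemma g_le (k e d : ℕ) (hed : e ≤ d) (h : 2*k+1 ≤ d) :
    ((e.choose (k+1):ℤ) - e.choose k) ≤ d.choose (k+1) - d.choose k := by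
  by_cases he : 2*k+1 ≤ e
  · exact g_mono_up k e d hed he
  · have hd1 := decr_choose e k (by omega)
    have a := decr_choose (2*k+1) k (le_refl _)
    have b := incr_choose (2*k+1) k (le_refl _)
    have h3 := g_mono_up k (2*k+1) d h (le_refl _)
    have h4 : ((2*k+1).choose (k+1):ℤ) - (2*k+1).choose k = 0 := by push_cast; omega
    have h5 : ((e.choose (k+1):ℤ) - e.choose k) ≤ 0 := by push_cast; omega
    linarith

lemma g_mono_down (k e : ℕ) : ∀ d, e ≤ d → d ≤ 2*k →
    ((d.choose (k+1):ℤ) - d.choose k) ≤ e.choose (k+1) - e.choose k := by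
  intro d hd
  induction d, hd using Nat.le_induction with
  | base => intro _; exact le_refl _
  | succ n hn ih =>
    intro hle
    obtain ⟨m, rfl⟩ : ∃ m, k = m + 1 := ⟨k-1, by omega⟩
    have hstep := g_step n m
    have hdecr : (n.choose (m+1) : ℤ) ≤ n.choose m := by
      exact_mod_cast decr_choose n m (by omega)
    have := ih (by omega)
    linarith

/-- for `0 ≤ e_1 ≤ ⋯ ≤ e_s < d` and `f` defined by
`∑_{i=0}^d f_{i-1} x^i = (1+x)^d + ∑_j ((1+x)^d - (1+x)^{e_j})` (here `f i` denotes
`f_{i-1}`), the sequence `f_{-1}, f_0, …, f_{d-1}` weakly increases up to `f_{⌊(d+1)/2⌋-1}`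
and weakly decreases afterwards; in particular it is unimodal. -/
theorem stmt_15 (d s : ℕ) (hd : 1 ≤ d) (e : Fin s → ℕ)
    (hemono : Monotone e) (hed : ∀ j, e j < d) (f : ℕ → ℤ)
    (hf : ∑ i ∈ Finset.range (d + 1), Polynomial.C (f i) * Polynomial.X ^ i
      = (1 + Polynomial.X : Polynomial ℤ) ^ d
        + ∑ j : Fin s,
            ((1 + Polynomial.X : Polynomial ℤ) ^ d - (1 + Polynomial.X) ^ (e j))) :
    (∀ i, i < (d + 1) / 2 → f i ≤ f (i + 1)) ∧
    (∀ i, (d + 1) / 2 ≤ i → i < d → f (i + 1) ≤ f i) := by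
  have key : ∀ k, k ≤ d →
      f k = (s+1 : ℤ) * d.choose k - ∑ j : Fin s, ((e j).choose k : ℤ) := by
    intro k hk
    have h := congrArg (fun p => Polynomial.coeff p k) hf
    simp only [finset_sum_coeff, coeff_C_mul, coeff_X_pow, coeff_add, coeff_sub,
      Polynomial.coeff_one_add_X_pow, mul_ite, mul_one, mul_zero,
      Finset.sum_ite_eq (Finset.range (d+1))] at h
    rw [if_pos (Finset.mem_range.2 (by omega))] at h
    rw [h, Finset.sum_sub_distrib, Finset.sum_const, Finset.card_univ, Fintype.card_fin]
    push_cast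
    ring
  constructor
  · intro i hi
    have h1 : 2*i+1 ≤ d := by omega
    rw [key i (by omega), key (i+1) (by omega)]
    have hsum := Finset.sum_le_sum
      (fun (j : Fin s) (_ : j ∈ Finset.univ) =>
        g_le i (e j) d (hed j).le h1)
    simp only [Finset.sum_sub_distrib, Finset.sum_const, Finset.card_univ,
      Fintype.card_fin, nsmul_eq_mul] at hsum
    have hincr : (d.choose i : ℤ) ≤ d.choose (i+1) := by
      exact_mod_cast incr_choose d i h1
    linarith
  · intro i hi hi2
    have h1 : d ≤ 2*i := by omega
    rw [key i (by omega), key (i+1) (by omega)]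
    have hsum := Finset.sum_le_sum
      (fun (j : Fin s) (_ : j ∈ Finset.univ) =>
        g_mono_down i (e j) d (hed j).le h1)
    simp only [Finset.sum_sub_distrib, Finset.sum_const, Finset.card_univ,
      Fintype.card_fin, nsmul_eq_mul] at hsum
    have hdecr : (d.choose (i+1) : ℤ) ≤ d.choose i := by
      exact_mod_cast decr_choose d i (by omega)
    linarith
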